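/- arXiv:0907.1971 — 2 statements merged into one kernel-verified Lean document; each statement's English description precedes it below -/
import Mathlib

section
/- Let k be a field with the following system-solvability (Tsen–Lang) property: for every N ≥ 1 and every finite family g_1, …, g_m ∈ k[Y_1, …, Y_N] of homogeneous polynomials of degrees e_1, …, e_m with e_j ≥ 1 for all j and ∑_{j=1}^m e_j < N, there exists a nonzero y ∈ k^N with g_j(y) = 0 for all j. Let f_1, …, f_r ∈ k[X_0, …, X_n] be homogeneous polynomials of respective degrees d_1, …, d_r with d_i ≥ 1 for all i and ∑_{i=1}^r d_i² ≤ n. Let a, b ∈ k^{n+1} be linearly independent vectors satisfying f_i(a) = 0 and f_i(b) = 0 for all i. Then there exists a nonzero vector c ∈ k^{n+1} such that for every i, the polynomial f_i(s·a + t·c) ∈ k[s,t] obtained by substituting X_m ↦ s·a_m + t·c_m is the zero polynomial, and likewise f_i(s·b + t·c) is the zero polynomial of k[s,t]. -/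
/-!
Expand `f(a + X) = ∑ⱼ Hⱼ(X)` into its homogeneous components `Hⱼ`, of degree `j`. Then
`f(a + t c) = ∑ⱼ Hⱼ(c) tʲ` with `H₀ = f(a)`, and since `f(s a + t c)` is a binary form of degree
`d = deg f`, it vanishes as soon as this dehomogenization does up to `t^{d-1}` and `f(c) = 0`.
So the line through `a` and `c` lies in the zero set of `f` once `c` is a common zero of `f` and
`H₁, …, H_{d-1}`. Imposing this for `a` and for `b` costs forms of total degree
`d + 2 (1 + ⋯ + (d - 1)) = d²` per `fᵢ`; as `∑ dᵢ² < n + 1`, the hypothesis on `k` gives a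
nonzero common zero `c` of all of them.
-/

open MvPolynomial

namespace Polynomial

variable {R : Type*} [CommSemiring R]

lemma eval_one_zero_homogenize (p : R[X]) (n : ℕ) :
    MvPolynomial.eval ![1, 0] (p.homogenize n) = p.coeff n := by
  rw [homogenize, map_sum, Finset.sum_eq_single (n, 0)]
  · simp [MvPolynomial.eval_monomial, Finsupp.prod_fintype]
  · rintro ⟨k, l⟩ hkl hne
    have hl : l ≠ 0 := by
      rintro rfl
      simp_all
    simp [MvPolynomial.eval_monomial, Finsupp.prod_fintype, hl]
  · simp

end Polynomial

namespace MvPolynomial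

variable {R : Type*} [CommSemiring R]

lemma IsHomogeneous.eq_zero_of_coeff_aeval_one_X {G : MvPolynomial (Fin 2) R} {n : ℕ}
    (hG : G.IsHomogeneous n)
    (hlow : ∀ j < n, (MvPolynomial.aeval ![1, (Polynomial.X : Polynomial R)] G).coeff j = 0)
    (htop : eval ![0, 1] G = 0) : G = 0 := by
  set p := MvPolynomial.aeval ![1, (Polynomial.X : Polynomial R)] G
  have hswap : ![(Polynomial.X : Polynomial R), 1] ∘ Equiv.swap (0 : Fin 2) 1
      = ![1, Polynomial.X] := by
    funext i
    fin_cases i <;> rfl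
  have hpG : p.homogenize n = rename (Equiv.swap 0 1) G :=
    Polynomial.homogenize_eq_of_isHomogeneous hG.rename_isHomogeneous (by rw [aeval_rename, hswap])
  have hp : ∀ j ≤ n, p.coeff j = 0 := fun j hj => by
    rcases hj.lt_or_eq with hj | rfl
    · exact hlow j hj
    · rw [← Polynomial.eval_one_zero_homogenize, hpG, eval_rename]
      convert htop
      funext i
      fin_cases i <;> rfl
  apply rename_injective _ (Equiv.swap (0 : Fin 2) 1).injective
  rw [map_zero]
  ext w
  rw [← hpG, Polynomial.coeff_homogenize, coeff_zero]
  split_ifs with hw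
  · exact hp _ (by omega)
  · rfl

lemma coeff_aeval_C_mul_X {σ : Type*} (p : MvPolynomial σ R) (c : σ → R) (j : ℕ) :
    (aeval (fun m => Polynomial.C (c m) * Polynomial.X) p).coeff j
      = eval c (homogeneousComponent j p) := by
  induction p using MvPolynomial.induction_on' with
  | monomial u r =>
    rw [homogeneousComponent_of_mem (isHomogeneous_monomial r rfl)]
    simp only [aeval_monomial, Finsupp.prod, mul_pow, Finset.prod_mul_distrib,
      Finset.prod_pow_eq_pow_sum, ← Polynomial.C_pow, ← map_prod, Polynomial.algebraMap_eq,
      ← mul_assoc, ← map_mul, Polynomial.coeff_C_mul_X_pow, ← Finsupp.degree_apply]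
    split_ifs <;> simp [eval_monomial, Finsupp.prod]
  | add p q hp hq => simp [hp, hq]

end MvPolynomial

section Taylor

variable {R σ : Type*} [CommSemiring R]

noncomputable def taylorComponent (f : MvPolynomial σ R) (a : σ → R) (j : ℕ) :
    MvPolynomial σ R :=
  homogeneousComponent j (aeval (fun m => C (a m) + X m) f)

lemma coeff_aeval_C_add_C_mul_X (f : MvPolynomial σ R) (a c : σ → R) (j : ℕ) :
    (aeval (fun m => Polynomial.C (a m) + Polynomial.C (c m) * Polynomial.X) f).coeff j
      = eval c (taylorComponent f a j) := by
  rw [taylorComponent, ← coeff_aeval_C_mul_X, comp_aeval_apply]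
  congr
  funext m
  simp

theorem aeval_line_eq_zero {f : MvPolynomial σ R} {n : ℕ} (hf : f.IsHomogeneous n)
    {a c : σ → R} (ha : eval a f = 0) (hc : eval c f = 0)
    (htaylor : ∀ j, 0 < j → j < n → eval c (taylorComponent f a j) = 0) :
    aeval (fun m => C (a m) * X 0 + C (c m) * X 1) f = (0 : MvPolynomial (Fin 2) R) := by
  have hline : (aeval (fun m => C (a m) * X 0 + C (c m) * X 1) f
      : MvPolynomial (Fin 2) R).IsHomogeneous n := by
    simpa using hf.aeval _ fun m =>
      (isHomogeneous_C_mul_X (a m) 0).add (isHomogeneous_C_mul_X (c m) 1)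
  refine hline.eq_zero_of_coeff_aeval_one_X (fun j hj => ?_) ?_
  · rw [comp_aeval_apply]
    simp only [map_add, map_mul, aeval_C, aeval_X, Matrix.cons_val_zero, Matrix.cons_val_one,
      Polynomial.algebraMap_eq, mul_one]
    rcases j.eq_zero_or_pos with rfl | hj0
    · rw [Polynomial.coeff_zero_eq_eval_zero, ← Polynomial.coe_aeval_eq_eval, comp_aeval_apply]
      simpa using ha
    · rw [coeff_aeval_C_add_C_mul_X]
      exact htaylor j hj0 hj
  · rw [← aeval_eq_eval, comp_aeval_apply]
    simpa using hc

end Taylor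

section LineSystem

variable {R σ ι κ : Type*} [CommSemiring R]

noncomputable def lineSystem (f : ι → MvPolynomial σ R) (d : ι → ℕ) (P : κ → σ → R) :
    (Σ i, Option (κ × Fin (d i - 1))) → MvPolynomial σ R
  | ⟨i, none⟩ => f i
  | ⟨i, some (p, t)⟩ => taylorComponent (f i) (P p) (t + 1)

def lineSystemDegree (κ : Type*) (d : ι → ℕ) : (Σ i, Option (κ × Fin (d i - 1))) → ℕ
  | ⟨i, none⟩ => d i
  | ⟨_, some (_, t)⟩ => t + 1

lemma isHomogeneous_lineSystem {f : ι → MvPolynomial σ R} {d : ι → ℕ}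
    (hf : ∀ i, (f i).IsHomogeneous (d i)) (P : κ → σ → R)
    (x : Σ i, Option (κ × Fin (d i - 1))) :
    (lineSystem f d P x).IsHomogeneous (lineSystemDegree κ d x) := by
  rcases x with ⟨i, _ | ⟨p, t⟩⟩
  · exact hf i
  · exact homogeneousComponent_isHomogeneous _ _

lemma one_le_lineSystemDegree {d : ι → ℕ} (hd : ∀ i, 1 ≤ d i)
    (x : Σ i, Option (κ × Fin (d i - 1))) : 1 ≤ lineSystemDegree κ d x := by
  rcases x with ⟨i, _ | ⟨p, t⟩⟩
  · exact hd i
  · exact Nat.le_add_left 1 t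

lemma add_two_mul_sum_fin_pred_succ (d : ℕ) :
    d + 2 * ∑ t : Fin (d - 1), ((t : ℕ) + 1) = d ^ 2 := by
  rcases d with _ | d
  · simp
  have gauss := Finset.sum_range_id_mul_two (d + 1)
  rw [Finset.sum_range_succ', Nat.add_sub_cancel] at gauss
  rw [Fin.sum_univ_eq_sum_range (fun t => t + 1), Nat.add_sub_cancel]
  nlinarith

lemma sum_lineSystemDegree [Fintype ι] [Fintype κ] (hκ : Fintype.card κ = 2) (d : ι → ℕ) :
    ∑ x, lineSystemDegree κ d x = ∑ i, d i ^ 2 := by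
  rw [Fintype.sum_sigma]
  refine Fintype.sum_congr _ _ fun i => ?_
  rw [Fintype.sum_option, Fintype.sum_prod_type]
  simp only [lineSystemDegree, Finset.sum_const, Finset.card_univ, hκ, smul_eq_mul]
  exact add_two_mul_sum_fin_pred_succ (d i)

theorem aeval_line_eq_zero_of_lineSystem {f : ι → MvPolynomial σ R} {d : ι → ℕ}
    (hf : ∀ i, (f i).IsHomogeneous (d i)) {P : κ → σ → R} (hP : ∀ p i, eval (P p) (f i) = 0)
    {c : σ → R} (hc : ∀ x, eval c (lineSystem f d P x) = 0) (i : ι) (p : κ) :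
    aeval (fun m => C (P p m) * X 0 + C (c m) * X 1) (f i) = (0 : MvPolynomial (Fin 2) R) :=
  aeval_line_eq_zero (hf i) (hP p i) (hc ⟨i, none⟩) fun j hj0 hjd => by
    obtain ⟨t, rfl⟩ : ∃ t : Fin (d i - 1), j = t + 1 := ⟨⟨j - 1, by omega⟩, by simp; omega⟩
    exact hc ⟨i, some (p, t)⟩

end LineSystem

def IsTsenLang (k : Type*) [Field k] : Prop :=
  ∀ (N m : ℕ), 1 ≤ N →
    ∀ (g : Fin m → MvPolynomial (Fin N) k) (e : Fin m → ℕ),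
      (∀ j, 1 ≤ e j) → (∀ j, (g j).IsHomogeneous (e j)) → (∑ j, e j) < N →
        ∃ y : Fin N → k, y ≠ 0 ∧ ∀ j, eval y (g j) = 0

theorem IsTsenLang.exists_ne_zero_forall_eval_eq_zero {k : Type*} [Field k] (hk : IsTsenLang k)
    {N : ℕ} (hN : 1 ≤ N) {ι : Type*} [Fintype ι] (g : ι → MvPolynomial (Fin N) k) (e : ι → ℕ)
    (he : ∀ i, 1 ≤ e i) (hg : ∀ i, (g i).IsHomogeneous (e i)) (hsum : ∑ i, e i < N) :
    ∃ y : Fin N → k, y ≠ 0 ∧ ∀ i, eval y (g i) = 0 := by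
  let enum := (Fintype.equivFin ι).symm
  obtain ⟨y, hy, hzero⟩ := hk N _ hN (g ∘ enum) (e ∘ enum) (fun _ => he _) (fun _ => hg _)
    (by rwa [Function.comp_def, enum.sum_comp e])
  exact ⟨y, hy, fun i => by simpa using hzero (enum.symm i)⟩

theorem statement1_general {k : Type*} [Field k]
    (hTL : ∀ (N m : ℕ), 1 ≤ N →
      ∀ (g : Fin m → MvPolynomial (Fin N) k) (e : Fin m → ℕ),
        (∀ j, 1 ≤ e j) → (∀ j, (g j).IsHomogeneous (e j)) → (∑ j, e j) < N →
          ∃ y : Fin N → k, y ≠ 0 ∧ ∀ j, eval y (g j) = 0)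
    (n r : ℕ) (f : Fin r → MvPolynomial (Fin (n + 1)) k) (d : Fin r → ℕ)
    (hd : ∀ i, 1 ≤ d i) (hhom : ∀ i, (f i).IsHomogeneous (d i))
    (hsum : ∑ i, d i ^ 2 ≤ n)
    (a b : Fin (n + 1) → k)
    (ha : ∀ i, eval a (f i) = 0) (hb : ∀ i, eval b (f i) = 0) :
    ∃ c : Fin (n + 1) → k, c ≠ 0 ∧ ∀ i,
      aeval (fun m => C (a m) * X 0 + C (c m) * X 1) (f i) = (0 : MvPolynomial (Fin 2) k) ∧
      aeval (fun m => C (b m) * X 0 + C (c m) * X 1) (f i) = (0 : MvPolynomial (Fin 2) k) := by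
  obtain ⟨c, hc0, hc⟩ := IsTsenLang.exists_ne_zero_forall_eval_eq_zero hTL (Nat.le_add_left 1 n)
    (lineSystem f d ![a, b]) (lineSystemDegree (Fin 2) d) (one_le_lineSystemDegree hd)
    (isHomogeneous_lineSystem hhom _) (by rw [sum_lineSystemDegree (Fintype.card_fin 2)]; omega)
  have hP : ∀ p i, eval (![a, b] p) (f i) = 0 := Fin.forall_fin_two.mpr ⟨ha, hb⟩
  exact ⟨c, hc0, fun i => ⟨aeval_line_eq_zero_of_lineSystem hhom hP hc i 0,
    aeval_line_eq_zero_of_lineSystem hhom hP hc i 1⟩⟩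

/-- If `k` satisfies the Tsen–Lang system-solvability property (every finite system of forms
whose degrees sum to less than the number of variables has a nontrivial common zero),
`f₁, …, f_r ∈ k[X₀, …, X_n]` are homogeneous of degrees `d₁, …, d_r ≥ 1` with `∑ dᵢ² ≤ n`,
and `a, b ∈ k^{n+1}` are linearly independent common zeros of the `fᵢ`, then there is a
nonzero `c ∈ k^{n+1}` such that for each `i` the polynomials `fᵢ(s·a + t·c)` and
`fᵢ(s·b + t·c)` are zero in `k[s,t]`. -/
theorem statement1 {k : Type*} [Field k]
    (hTL : ∀ (N m : ℕ), 1 ≤ N →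
      ∀ (g : Fin m → MvPolynomial (Fin N) k) (e : Fin m → ℕ),
        (∀ j, 1 ≤ e j) → (∀ j, (g j).IsHomogeneous (e j)) → (∑ j, e j) < N →
          ∃ y : Fin N → k, y ≠ 0 ∧ ∀ j, eval y (g j) = 0)
    (n r : ℕ) (f : Fin r → MvPolynomial (Fin (n + 1)) k) (d : Fin r → ℕ)
    (hd : ∀ i, 1 ≤ d i) (hhom : ∀ i, (f i).IsHomogeneous (d i))
    (hsum : ∑ i, d i ^ 2 ≤ n)
    (a b : Fin (n + 1) → k) (hab : LinearIndependent k ![a, b])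
    (ha : ∀ i, eval a (f i) = 0) (hb : ∀ i, eval b (f i) = 0) :
    ∃ c : Fin (n + 1) → k, c ≠ 0 ∧ ∀ i,
      aeval (fun m => C (a m) * X 0 + C (c m) * X 1) (f i) = (0 : MvPolynomial (Fin 2) k) ∧
      aeval (fun m => C (b m) * X 0 + C (c m) * X 1) (f i) = (0 : MvPolynomial (Fin 2) k) :=
  statement1_general hTL n r f d hd hhom hsum a b ha hb
end

section
/- Let k be a field, let f ∈ k[X_0, …, X_n] be a homogeneous polynomial of degree d ≥ 1, and let a ∈ k^{n+1} with f(a) = 0. For 0 ≤ j ≤ d let P_j ∈ k[X_0, …, X_n] be the coefficient of s^j in the polynomial obtained from f by the substitution X_m ↦ X_m + s·a_m in (k[X_0,…,X_n])[s]. If x ∈ k^{n+1} satisfies P_j(x) = 0 for all j = 0, …, d − 1 (in particular f(x) = P_0(x) = 0), then the polynomial f(s·a + t·x), obtained from f by the substitution X_m ↦ s·a_m + t·x_m, is the zero polynomial of k[s,t]; that is, the projective line through the points a and x is contained in the projective zero set of f. -/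
/-!
Write `h(s, t) = f(s·a + t·x)`, homogeneous of degree `d` in `k[s, t]`, and `g(s) = h(s, 1)
= f(x + s·a)`. The coefficient of `s^j` in `g` is `P_j(x)`, so the coefficients of `g` below
`s^d` vanish. A binary form of degree `d` is the homogenization of its dehomogenization, so `h` is
determined by the coefficients of `s^0, …, s^d` in `g`, and the last of these is
`h(1, 0) = f(a) = 0`.
-/

open MvPolynomial

lemma Polynomial.eval_one_zero_homogenize_s4 {R : Type*} [CommSemiring R] (p : Polynomial R)
    (n : ℕ) : MvPolynomial.eval ![1, 0] (p.homogenize n) = p.coeff n := by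
  simp only [homogenize, Finset.Nat.sum_antidiagonal_eq_sum_range_succ_mk, Finset.sum_range_succ,
    map_add, map_sum, MvPolynomial.eval_monomial, Finsupp.prod_pow, Fin.prod_univ_two,
    Finsupp.coe_update, Function.update_apply, Finsupp.single_apply, Matrix.cons_val_zero,
    Matrix.cons_val_one, Matrix.cons_val_fin_one, zero_ne_one, if_false, if_true, one_pow,
    one_mul, tsub_self, pow_zero, mul_one]
  rw [Finset.sum_eq_zero fun i hi => ?_, zero_add]
  rw [zero_pow (Nat.sub_ne_zero_of_lt (Finset.mem_range.mp hi)), mul_zero]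

namespace MvPolynomial

variable {R σ : Type*} [CommSemiring R]

lemma IsHomogeneous.eq_zero_of_eval_one_zero_of_coeff_lt {q : MvPolynomial (Fin 2) R} {n : ℕ}
    (hq : q.IsHomogeneous n) (h₀ : eval ![1, 0] q = 0)
    (h : ∀ j < n, (MvPolynomial.aeval ![(Polynomial.X : Polynomial R), 1] q).coeff j = 0) :
    q = 0 := by
  rw [← Polynomial.homogenize_eq_of_isHomogeneous hq rfl] at h₀ ⊢
  rw [Polynomial.eval_one_zero_homogenize_s4] at h₀
  ext m
  rw [Polynomial.coeff_homogenize, coeff_zero]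
  split_ifs with hm
  · rcases (show m 0 ≤ n by omega).lt_or_eq with hlt | rfl
    exacts [h _ hlt, h₀]
  · rfl

lemma map_eval_aeval_C_X_add_C_mul_X (f : MvPolynomial σ R) (a x : σ → R) :
    (aeval (fun m => Polynomial.C (X m) + Polynomial.C (C (a m)) * Polynomial.X) f).map (eval x)
      = aeval (fun m => Polynomial.C (x m) + Polynomial.C (a m) * Polynomial.X) f := by
  induction f using MvPolynomial.induction_on <;>
    simp_all [Polynomial.map_add, Polynomial.map_mul]

lemma aeval_X_one_aeval_C_mul_X_add_C_mul_X (f : MvPolynomial σ R) (a x : σ → R) :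
    aeval ![Polynomial.X, 1]
        (aeval (fun m => C (a m) * (X 0 : MvPolynomial (Fin 2) R) + C (x m) * X 1) f)
      = aeval (fun m => Polynomial.C (x m) + Polynomial.C (a m) * Polynomial.X) f := by
  rw [← AlgHom.comp_apply, comp_aeval]
  congr 1
  ext m
  simp [add_comm]

lemma eval_one_zero_aeval_C_mul_X_add_C_mul_X (f : MvPolynomial σ R) (a x : σ → R) :
    eval ![1, 0] (aeval (fun m => C (a m) * (X 0 : MvPolynomial (Fin 2) R) + C (x m) * X 1) f)
      = eval a f := by
  induction f using MvPolynomial.induction_on <;> simp_all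

lemma isHomogeneous_aeval_C_mul_X_add_C_mul_X {f : MvPolynomial σ R} {d : ℕ}
    (hf : f.IsHomogeneous d) (a x : σ → R) :
    (aeval (fun m => C (a m) * (X 0 : MvPolynomial (Fin 2) R) + C (x m) * X 1) f).IsHomogeneous
      d := by
  simpa only [one_mul] using
    hf.aeval _ fun m => (isHomogeneous_C_mul_X _ _).add (isHomogeneous_C_mul_X _ _)

end MvPolynomial

theorem statement4_general {k : Type*} [Field k] (n d : ℕ)
    (f : MvPolynomial (Fin (n + 1)) k) (hf : f.IsHomogeneous d)
    (a : Fin (n + 1) → k) (ha : eval a f = 0)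
    (P : ℕ → MvPolynomial (Fin (n + 1)) k)
    (hP : ∀ j, P j = (aeval
      (fun m => Polynomial.C (X m) + Polynomial.C (C (a m)) * Polynomial.X) f).coeff j)
    (x : Fin (n + 1) → k) (hx : ∀ j < d, eval x (P j) = 0) :
    aeval (fun m => C (a m) * X 0 + C (x m) * X 1) f = (0 : MvPolynomial (Fin 2) k) := by
  refine (isHomogeneous_aeval_C_mul_X_add_C_mul_X hf a x).eq_zero_of_eval_one_zero_of_coeff_lt
    (by rw [eval_one_zero_aeval_C_mul_X_add_C_mul_X, ha]) fun j hj => ?_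
  rw [aeval_X_one_aeval_C_mul_X_add_C_mul_X, ← map_eval_aeval_C_X_add_C_mul_X,
    Polynomial.coeff_map, ← hP, hx j hj]

/-- Let `f ∈ k[X₀, …, X_n]` be homogeneous of degree `d ≥ 1`, `a ∈ k^{n+1}` with
`f(a) = 0`, and for each `j` let `P_j` be the `s^j`-coefficient of the polynomial obtained
from `f` by substituting `X_m ↦ X_m + s·a_m` in `(k[X₀,…,X_n])[s]`. If `x ∈ k^{n+1}`
satisfies `P_j(x) = 0` for all `j = 0, …, d - 1`, then `f(s·a + t·x)` is the zero
polynomial of `k[s,t]`, i.e. the projective line through `a` and `x` lies in the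
projective zero set of `f`. -/
theorem statement4 {k : Type*} [Field k] (n d : ℕ) (hd : 1 ≤ d)
    (f : MvPolynomial (Fin (n + 1)) k) (hf : f.IsHomogeneous d)
    (a : Fin (n + 1) → k) (ha : eval a f = 0)
    (P : ℕ → MvPolynomial (Fin (n + 1)) k)
    (hP : ∀ j, P j = (aeval
      (fun m => Polynomial.C (X m) + Polynomial.C (C (a m)) * Polynomial.X) f).coeff j)
    (x : Fin (n + 1) → k) (hx : ∀ j < d, eval x (P j) = 0) :
    aeval (fun m => C (a m) * X 0 + C (x m) * X 1) f = (0 : MvPolynomial (Fin 2) k) :=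
  statement4_general n d f hf a ha P hP x hx
end
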